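/- Let $Z$ be exponential with mean $\mathbb{E}[z] > 0$, and let $a, N_0, p_p > 0$ be constants. Then $\mathbb{E}\left[\log_2\left(1 + \frac{a}{p_p Z + N_0}\right)\right] = \log_2\left(1 + \frac{a}{N_0}\right) - \frac{e^{N_0/(p_p\mathbb{E}[z])}}{\ln 2}\left[E_1\left(\frac{N_0}{p_p\mathbb{E}[z]}\right) - e^{a/(p_p\mathbb{E}[z])} E_1\left(\frac{a + N_0}{p_p\mathbb{E}[z]}\right)\right]$, where $E_1(x) = \int_x^{\infty} t^{-1}e^{-t}\,dt$ is the first-order exponential integral. -/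

import Mathlib

open MeasureTheory ProbabilityTheory Real

/-- The first-order exponential integral `E₁(x) = ∫_x^∞ t⁻¹ e^{-t} dt`. -/
noncomputable def expIntegralE1 (x : ℝ) : ℝ := ∫ t in Set.Ioi x, t⁻¹ * Real.exp (-t)

/-!
If `Z` is exponential with rate `r = 1 / Ez`, then `U = r Z` is standard exponential. With
`s₁ = N0 / (pp Ez)` and `s₂ = (a + N0) / (pp Ez)` the integrand splits as
`log (1 + a / (pp Z + N0)) = log (1 + a / N0) + log (1 + U / s₂) - log (1 + U / s₁)`,
and integration by parts followed by the shift `t = u + s` gives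
`∫₀^∞ log (1 + u / s) e^{-u} du = ∫₀^∞ e^{-u} / (u + s) du = e^s E₁(s)`.
-/

open Set Filter Topology
open scoped ENNReal

theorem integral_comp_add_right_Ioi {E : Type*} [NormedAddCommGroup E] [NormedSpace ℝ E]
    (f : ℝ → E) (a d : ℝ) :
    ∫ x in Ioi a, f (x + d) = ∫ x in Ioi (a + d), f x := by
  rw [← integral_indicator measurableSet_Ioi, ← integral_indicator measurableSet_Ioi,
    ← integral_add_right_eq_self ((Ioi (a + d)).indicator f) d]
  congr 1
  ext x
  simp [indicator_apply]

theorem exp_mul_expIntegralE1 (s : ℝ) :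
    exp s * expIntegralE1 s = ∫ u in Ioi 0, (u + s)⁻¹ * exp (-u) := by
  rw [expIntegralE1, ← zero_add s, ← integral_comp_add_right_Ioi, ← integral_const_mul]
  refine integral_congr_ae (ae_of_all _ fun u => ?_)
  simp only [zero_add, neg_add, exp_add, exp_neg]
  field_simp

theorem log_one_add_le_self {x : ℝ} (hx : -1 < x) : log (1 + x) ≤ x := by
  linarith [log_le_sub_one_of_pos (show 0 < 1 + x by linarith)]

theorem log_one_add_div_mul_exp_neg_mem_Icc {s u : ℝ} (hs : 0 < s) (hu : 0 ≤ u) :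
    log (1 + u / s) * exp (-u) ∈ Icc 0 (s⁻¹ * (u * exp (-u))) := by
  have hx : 0 ≤ u / s := by positivity
  have hlog : 0 ≤ log (1 + u / s) := log_nonneg (by linarith)
  refine ⟨by positivity, ?_⟩
  calc log (1 + u / s) * exp (-u) ≤ u / s * exp (-u) := by
        gcongr; exact log_one_add_le_self (by linarith)
    _ = s⁻¹ * (u * exp (-u)) := by ring

theorem integrableOn_Ioi_log_one_add_div_mul_exp_neg {s : ℝ} (hs : 0 < s) :
    IntegrableOn (fun u => log (1 + u / s) * exp (-u)) (Ioi 0) := by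
  have hdom : IntegrableOn (fun u => s⁻¹ * (u * exp (-u))) (Ioi 0) := by
    have hΓ := GammaIntegral_convergent two_pos
    refine (hΓ.congr_fun (fun u _ => ?_) measurableSet_Ioi).const_mul _
    norm_num [mul_comm]
  refine hdom.mono' (by fun_prop)
    ((ae_restrict_mem measurableSet_Ioi).mono fun u (hu : 0 < u) => ?_)
  have h := log_one_add_div_mul_exp_neg_mem_Icc hs hu.le
  rw [norm_of_nonneg h.1]
  exact h.2

theorem integrableOn_Ioi_inv_add_mul_exp_neg {s : ℝ} (hs : 0 < s) :
    IntegrableOn (fun u => (u + s)⁻¹ * exp (-u)) (Ioi 0) := by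
  refine ((integrableOn_exp_neg_Ioi 0).const_mul s⁻¹).mono' (by fun_prop)
    ((ae_restrict_mem measurableSet_Ioi).mono fun u (hu : 0 < u) => ?_)
  rw [norm_of_nonneg (by positivity)]
  gcongr
  linarith

theorem tendsto_log_one_add_div_mul_exp_neg_atTop {s : ℝ} (hs : 0 < s) :
    Tendsto (fun u => log (1 + u / s) * exp (-u)) atTop (𝓝 0) := by
  have hdom : Tendsto (fun u => s⁻¹ * (u * exp (-u))) atTop (𝓝 0) := by
    simpa using (tendsto_pow_mul_exp_neg_atTop_nhds_zero 1).const_mul s⁻¹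
  refine squeeze_zero' ?_ ?_ hdom <;> filter_upwards [eventually_ge_atTop 0] with u hu
  exacts [(log_one_add_div_mul_exp_neg_mem_Icc hs hu).1,
    (log_one_add_div_mul_exp_neg_mem_Icc hs hu).2]

theorem integral_log_one_add_div_mul_exp_neg {s : ℝ} (hs : 0 < s) :
    ∫ u in Ioi 0, log (1 + u / s) * exp (-u) = exp s * expIntegralE1 s := by
  have hlog : ∀ u ∈ Ioi (0 : ℝ), HasDerivAt (fun u => log (1 + u / s)) (u + s)⁻¹ u := by
    intro u (hu : 0 < u)
    refine ((((hasDerivAt_id u).div_const s).const_add 1).log (by positivity)).congr_deriv ?_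
    simp only [id]
    field_simp
    ring
  have hexp : ∀ u ∈ Ioi (0 : ℝ), HasDerivAt (fun u => -exp (-u)) (exp (-u)) u := fun u _ =>
    (hasDerivAt_neg' u).exp.neg.congr_deriv (by simp)
  have hzero : Tendsto ((fun u => log (1 + u / s)) * fun u => -exp (-u)) (𝓝[>] 0) (𝓝 0) := by
    have : ContinuousAt ((fun u => log (1 + u / s)) * fun u => -exp (-u)) 0 := by
      fun_prop (disch := simp)
    simpa using this.tendsto.mono_left nhdsWithin_le_nhds
  have hinfty : Tendsto ((fun u => log (1 + u / s)) * fun u => -exp (-u)) atTop (𝓝 0) := by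
    simpa only [Pi.mul_def, mul_neg, neg_zero] using
      (tendsto_log_one_add_div_mul_exp_neg_atTop hs).neg
  rw [exp_mul_expIntegralE1, integral_Ioi_mul_deriv_eq_deriv_mul hlog hexp ?_ ?_ hzero hinfty]
  · simp [integral_neg]
  · exact integrableOn_Ioi_log_one_add_div_mul_exp_neg hs
  · simpa only [Pi.mul_def, Pi.neg_def, mul_neg] using
      (integrableOn_Ioi_inv_add_mul_exp_neg hs).neg

theorem integral_expMeasure {r : ℝ} (hr : 0 < r) (f : ℝ → ℝ) :
    ∫ x, f x ∂expMeasure r = ∫ x in Ioi 0, r * exp (-(r * x)) * f x := by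
  -- `ENNReal.ofReal x` is `↑x.toNNReal` by definition.
  have hdens : expMeasure r =
      volume.withDensity fun x => ((exponentialPDFReal r x).toNNReal : ℝ≥0∞) := rfl
  rw [hdens, integral_withDensity_eq_integral_smul (measurable_exponentialPDFReal r).real_toNNReal,
    ← integral_Ici_eq_integral_Ioi, ← integral_indicator measurableSet_Ici]
  congr 1 with x
  rw [NNReal.smul_def, Real.coe_toNNReal _ (exponentialPDFReal_nonneg hr x), smul_eq_mul,
    indicator_apply]
  split_ifs with hx <;> simp_all [exponentialPDFReal, gammaPDFReal]

theorem setIntegral_Ioi_mul_exp_neg_mul {r : ℝ} (hr : 0 < r) (f : ℝ → ℝ) :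
    ∫ x in Ioi 0, r * exp (-(r * x)) * f x = ∫ u in Ioi 0, f (u / r) * exp (-u) := by
  calc ∫ x in Ioi 0, r * exp (-(r * x)) * f x
      = r * ∫ x in Ioi 0, f (r * x / r) * exp (-(r * x)) := by
        rw [← integral_const_mul]
        congr 1 with x
        rw [mul_div_cancel_left₀ _ hr.ne']
        ring
    _ = ∫ u in Ioi 0, f (u / r) * exp (-u) := by
        rw [integral_comp_mul_left_Ioi (fun u => f (u / r) * exp (-u)) 0 hr, mul_zero, smul_eq_mul,
          mul_inv_cancel_left₀ hr.ne']

theorem integral_comp_eq_of_map_eq_expMeasure {Ω : Type*} [MeasurableSpace Ω] {P : Measure Ω}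
    {X : Ω → ℝ} {r : ℝ} (hr : 0 < r) (hX : P.map X = expMeasure r) {f : ℝ → ℝ}
    (hf : AEStronglyMeasurable f (expMeasure r)) :
    ∫ ω, f (X ω) ∂P = ∫ u in Ioi 0, f (u / r) * exp (-u) := by
  have : IsProbabilityMeasure (P.map X) := hX ▸ isProbabilityMeasure_expMeasure hr
  rw [← integral_map (aemeasurable_of_map_neZero inferInstance) (hX ▸ hf), hX,
    integral_expMeasure hr, setIntegral_Ioi_mul_exp_neg_mul hr]

theorem log_one_add_div_add {a c q : ℝ} (ha : 0 ≤ a) (hc : 0 < c) (hq : 0 ≤ q) :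
    log (1 + a / (q + c)) = log (1 + a / c) + log (1 + q / (a + c)) - log (1 + q / c) := by
  rw [← log_mul (by positivity) (by positivity), ← log_div (by positivity) (by positivity)]
  congr 1
  field_simp
  ring

theorem stmt_7_general {Ω : Type*} [MeasureSpace Ω]
    (Z : Ω → ℝ) (Ez a pp N0 : ℝ) (hEz : 0 < Ez) (ha : 0 < a) (hpp : 0 < pp) (hN0 : 0 < N0)
    (hZd : Measure.map Z ℙ = expMeasure (1 / Ez)) :
    ∫ ω, Real.logb 2 (1 + a / (pp * Z ω + N0)) ∂ℙ
      = Real.logb 2 (1 + a / N0)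
        - Real.exp (N0 / (pp * Ez)) / Real.log 2 *
          (expIntegralE1 (N0 / (pp * Ez))
            - Real.exp (a / (pp * Ez)) * expIntegralE1 ((a + N0) / (pp * Ez))) := by
  set s₁ := N0 / (pp * Ez) with hs₁_def
  set s₂ := (a + N0) / (pp * Ez) with hs₂_def
  have hs₁ : 0 < s₁ := by positivity
  have hs₂ : 0 < s₂ := by positivity
  have hsplit : ∀ u ∈ Ioi (0 : ℝ), logb 2 (1 + a / (pp * (u / (1 / Ez)) + N0)) * exp (-u) =
      logb 2 (1 + a / N0) * exp (-u) + (log 2)⁻¹ *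
        (log (1 + u / s₂) * exp (-u) - log (1 + u / s₁) * exp (-u)) := by
    intro u (hu : 0 < u)
    rw [logb, logb, log_one_add_div_add ha.le hN0 (by positivity)]
    have h₁ : pp * (u / (1 / Ez)) / N0 = u / s₁ := by rw [hs₁_def]; field_simp
    have h₂ : pp * (u / (1 / Ez)) / (a + N0) = u / s₂ := by rw [hs₂_def]; field_simp
    rw [h₁, h₂]
    ring
  have hexp : exp s₂ = exp s₁ * exp (a / (pp * Ez)) := by
    rw [← exp_add, hs₁_def, hs₂_def]; congr 1; field_simp; ring
  have hI₁ := integrableOn_Ioi_log_one_add_div_mul_exp_neg hs₁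
  have hI₂ := integrableOn_Ioi_log_one_add_div_mul_exp_neg hs₂
  have hf : Measurable fun x => logb 2 (1 + a / (pp * x + N0)) := by unfold logb; fun_prop
  rw [integral_comp_eq_of_map_eq_expMeasure (by positivity) hZd hf.aestronglyMeasurable,
    setIntegral_congr_fun measurableSet_Ioi hsplit,
    integral_add ((integrableOn_exp_neg_Ioi 0).const_mul _) ?_,
    integral_const_mul, integral_const_mul, integral_sub hI₂ hI₁, integral_exp_neg_Ioi_zero,
    integral_log_one_add_div_mul_exp_neg hs₁, integral_log_one_add_div_mul_exp_neg hs₂,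
    hexp, logb]
  · ring
  · exact (hI₂.sub hI₁).const_mul _

/-- Average channel capacity per secondary stream in the massive MIMO regime:
for `Z` exponential with mean `Ez` and constants `a, pp, N0 > 0`,
`𝔼[log₂(1 + a/(pp Z + N0))]` has the stated closed form in terms of `E₁`. -/
theorem stmt_7 {Ω : Type*} [MeasureSpace Ω] [IsProbabilityMeasure (ℙ : Measure Ω)]
    (Z : Ω → ℝ) (Ez a pp N0 : ℝ) (hEz : 0 < Ez) (ha : 0 < a) (hpp : 0 < pp) (hN0 : 0 < N0)
    (hZd : Measure.map Z ℙ = expMeasure (1 / Ez)) :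
    ∫ ω, Real.logb 2 (1 + a / (pp * Z ω + N0)) ∂ℙ
      = Real.logb 2 (1 + a / N0)
        - Real.exp (N0 / (pp * Ez)) / Real.log 2 *
          (expIntegralE1 (N0 / (pp * Ez))
            - Real.exp (a / (pp * Ez)) * expIntegralE1 ((a + N0) / (pp * Ez))) :=
  stmt_7_general Z Ez a pp N0 hEz ha hpp hN0 hZd
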